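/- For every x ∈ (0,1), the limit as |s| → ∞ of √|s|·|g(√(is),x,x)| equals 1/2; that is, for every ε > 0 there exists M > 0 such that for all real s with |s| > M, |√|s|·|g(√(is),x,x)| − 1/2| < ε. -/

import Mathlib

open MeasureTheory Set Filter
open scoped Real Topology

/-- The Green's function `g(m,x,y)` for complex parameter `m`, with
`g(0,x,y)` given by the triangular kernel. -/
noncomputable def gC (m : ℂ) (x y : ℝ) : ℂ :=
  if m = 0 then
    (((if y ≤ x then (1 - x) * y else x * (1 - y)) : ℝ) : ℂ)
  else if y ≤ x then
    -(Complex.sinh (m * ((x : ℂ) - 1)) * Complex.sinh (m * (y : ℂ))) / (m * Complex.sinh m)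
  else
    -(Complex.sinh (m * (x : ℂ)) * Complex.sinh (m * ((y : ℂ) - 1))) / (m * Complex.sinh m)

/-- `√(is) = (1+i)·√|s|/√2` for real `s`. -/
noncomputable def sqrtis (s : ℝ) : ℂ :=
  (1 + Complex.I) * (Real.sqrt |s| : ℂ) / (Real.sqrt 2 : ℂ)


/-!
Write `√(is) = r(1 + i)` with `r = √(|s|/2)`, so that `|√(is)| = √|s|` and
`√|s|·|g(√(is),x,x)| = |sinh(m(1-x))|·|sinh(mx)|/|sinh m|` for `m = √(is)`.
Since `sinh (Re z) ≤ |sinh z| ≤ cosh (Re z)`, this is squeezed between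
`sinh a sinh b / cosh (a+b)` and `cosh a cosh b / sinh (a+b)` with `a = r(1-x)`, `b = rx`.
Both tend to `1/2` as `a, b → ∞`, because `sinh t` and `cosh t` are `eᵗ/2` up to a factor
`1 ∓ e^{-2t}`.
-/

lemma Real.sinh_eq_exp_mul (t : ℝ) :
    Real.sinh t = Real.exp t * ((1 - Real.exp (-(2 * t))) / 2) := by
  rw [Real.sinh_eq, mul_div_assoc', mul_sub, mul_one, ← Real.exp_add]
  ring_nf

lemma Real.cosh_eq_exp_mul (t : ℝ) :
    Real.cosh t = Real.exp t * ((1 + Real.exp (-(2 * t))) / 2) := by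
  rw [Real.cosh_eq, mul_div_assoc', mul_add, mul_one, ← Real.exp_add]
  ring_nf

section Asymptotics

variable {α : Type*} {l : Filter α} {a b : α → ℝ}

lemma tendsto_exp_neg_two_mul (ha : Tendsto a l atTop) :
    Tendsto (fun i => Real.exp (-(2 * a i))) l (𝓝 0) :=
  Real.tendsto_exp_neg_atTop_nhds_zero.comp (ha.const_mul_atTop two_pos)

lemma tendsto_sinh_mul_sinh_div_cosh_add (ha : Tendsto a l atTop) (hb : Tendsto b l atTop) :
    Tendsto (fun i => Real.sinh (a i) * Real.sinh (b i) / Real.cosh (a i + b i)) l (𝓝 (1 / 2)) := by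
  have h := (((tendsto_exp_neg_two_mul ha).const_sub 1).div_const 2).mul
    (((tendsto_exp_neg_two_mul hb).const_sub 1).div_const 2) |>.div
    (((tendsto_exp_neg_two_mul (ha.atTop_add_atTop hb)).const_add 1).div_const 2)
    (by norm_num)
  norm_num at h
  refine h.congr fun i => ?_
  simp only [Pi.div_apply]
  rw [Real.sinh_eq_exp_mul, Real.sinh_eq_exp_mul (b i), Real.cosh_eq_exp_mul, Real.exp_add]
  field_simp

lemma tendsto_cosh_mul_cosh_div_sinh_add (ha : Tendsto a l atTop) (hb : Tendsto b l atTop) :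
    Tendsto (fun i => Real.cosh (a i) * Real.cosh (b i) / Real.sinh (a i + b i)) l (𝓝 (1 / 2)) := by
  have h := (((tendsto_exp_neg_two_mul ha).const_add 1).div_const 2).mul
    (((tendsto_exp_neg_two_mul hb).const_add 1).div_const 2) |>.div
    (((tendsto_exp_neg_two_mul (ha.atTop_add_atTop hb)).const_sub 1).div_const 2)
    (by norm_num)
  norm_num at h
  refine h.congr' ?_
  filter_upwards [(ha.atTop_add_atTop hb).eventually_gt_atTop 0] with i hi
  simp only [Pi.div_apply]
  have : Real.exp (-(2 * (a i + b i))) < 1 := Real.exp_lt_one_iff.mpr (by linarith)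
  rw [Real.cosh_eq_exp_mul, Real.cosh_eq_exp_mul (b i), Real.sinh_eq_exp_mul, Real.exp_add]
  field_simp [(sub_pos.mpr this).ne']

end Asymptotics

namespace Complex

lemma sinh_re_le_norm_sinh (z : ℂ) : Real.sinh z.re ≤ ‖sinh z‖ := by
  have h := norm_sub_norm_le (exp z) (exp (-z))
  rw [norm_exp, norm_exp, neg_re] at h
  rw [sinh, norm_div, Real.sinh_eq, Complex.norm_two]
  gcongr

lemma norm_sinh_le_cosh_re (z : ℂ) : ‖sinh z‖ ≤ Real.cosh z.re := by
  have h := norm_sub_le (exp z) (exp (-z))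
  rw [norm_exp, norm_exp, neg_re] at h
  rw [sinh, norm_div, Real.cosh_eq, Complex.norm_two]
  gcongr

variable {z w : ℂ}

lemma sinh_re_mul_sinh_re_div_cosh_le (hz : 0 < z.re) (hw : 0 < w.re) :
    Real.sinh z.re * Real.sinh w.re / Real.cosh (z.re + w.re) ≤
      ‖sinh z‖ * ‖sinh w‖ / ‖sinh (z + w)‖ := by
  have hzw := add_re z w ▸ sinh_re_le_norm_sinh (z + w)
  have hpos : 0 < ‖sinh (z + w)‖ := (Real.sinh_pos_iff.mpr (add_pos hz hw)).trans_le hzw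
  refine div_le_div₀ (by positivity) ?_ hpos (add_re z w ▸ norm_sinh_le_cosh_re (z + w))
  exact mul_le_mul (sinh_re_le_norm_sinh z) (sinh_re_le_norm_sinh w)
    (Real.sinh_nonneg_iff.mpr hw.le) (norm_nonneg _)

lemma norm_sinh_mul_norm_sinh_div_le (h : 0 < z.re + w.re) :
    ‖sinh z‖ * ‖sinh w‖ / ‖sinh (z + w)‖ ≤
      Real.cosh z.re * Real.cosh w.re / Real.sinh (z.re + w.re) := by
  refine div_le_div₀ (by positivity) ?_ (Real.sinh_pos_iff.mpr h)
    (add_re z w ▸ sinh_re_le_norm_sinh (z + w))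
  exact mul_le_mul (norm_sinh_le_cosh_re z) (norm_sinh_le_cosh_re w) (norm_nonneg _)
    (Real.cosh_pos _).le

end Complex

lemma norm_mul_norm_gC_self {m : ℂ} (hm : m ≠ 0) (x : ℝ) :
    ‖m‖ * ‖gC m x x‖ =
      ‖Complex.sinh (m * (1 - x : ℝ))‖ * ‖Complex.sinh (m * x)‖ / ‖Complex.sinh m‖ := by
  have hneg : m * ((x : ℂ) - 1) = -(m * (1 - x : ℝ)) := by push_cast; ring
  rw [gC, if_neg hm, if_pos le_rfl, hneg, Complex.sinh_neg, norm_div, norm_neg, norm_mul, norm_neg,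
    norm_mul]
  field_simp [norm_ne_zero_iff.mpr hm]

lemma sqrtis_re (s : ℝ) : (sqrtis s).re = √|s| / √2 := by
  simp [sqrtis, Complex.div_ofReal_re]

lemma norm_sqrtis (s : ℝ) : ‖sqrtis s‖ = √|s| := by
  have h : ‖1 + Complex.I‖ = √2 := by
    simpa [one_add_one_eq_two] using Complex.norm_add_mul_I 1 1
  simp [sqrtis, h, abs_of_nonneg (Real.sqrt_nonneg _)]

lemma tendsto_sqrtis_re : Tendsto (fun s => (sqrtis s).re) (comap abs atTop) atTop := by
  simp_rw [sqrtis_re]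
  exact (Real.tendsto_sqrt_atTop.comp tendsto_comap).atTop_div_const (by positivity)

theorem tendsto_sqrt_abs_mul_norm_gC_sqrtis_self {x : ℝ} (hx : x ∈ Ioo (0 : ℝ) 1) :
    Tendsto (fun s => √|s| * ‖gC (sqrtis s) x x‖) (comap abs atTop) (𝓝 (1 / 2)) := by
  obtain ⟨hx0, hx1⟩ := hx
  have ha := tendsto_sqrtis_re.atTop_mul_const (sub_pos.mpr hx1)
  have hb := tendsto_sqrtis_re.atTop_mul_const hx0
  have hsplit (m : ℂ) : m * ((1 - x : ℝ) : ℂ) + m * (x : ℂ) = m := by push_cast; ring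
  refine tendsto_of_tendsto_of_tendsto_of_le_of_le' (tendsto_sinh_mul_sinh_div_cosh_add ha hb)
    (tendsto_cosh_mul_cosh_div_sinh_add ha hb) ?_ ?_
  all_goals
    filter_upwards [tendsto_sqrtis_re.eventually_gt_atTop 0] with s hs
    have hm : sqrtis s ≠ 0 := fun h => by simp [h] at hs
    have hz : (sqrtis s * ((1 - x : ℝ) : ℂ)).re = (sqrtis s).re * (1 - x) :=
      Complex.re_mul_ofReal _ _
    have hw : (sqrtis s * (x : ℂ)).re = (sqrtis s).re * x := Complex.re_mul_ofReal _ _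
    have hz0 : 0 < (sqrtis s * ((1 - x : ℝ) : ℂ)).re := hz ▸ mul_pos hs (sub_pos.mpr hx1)
    have hw0 : 0 < (sqrtis s * (x : ℂ)).re := hw ▸ mul_pos hs hx0
    rw [← norm_sqrtis, norm_mul_norm_gC_self hm, ← hz, ← hw]
  · simpa only [hsplit] using Complex.sinh_re_mul_sinh_re_div_cosh_le hz0 hw0
  · simpa only [hsplit] using Complex.norm_sinh_mul_norm_sinh_div_le (add_pos hz0 hw0)

/-- For every `x ∈ (0,1)`,
`lim_{|s| → ∞} √|s| · |g(√(is),x,x)| = 1/2`: for every `ε > 0` there exists `M > 0`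
such that for all real `s` with `|s| > M`,
`| √|s| · |g(√(is),x,x)| − 1/2 | < ε`. -/
theorem gC_abs_diagonal_limit (x : ℝ) (hx : x ∈ Set.Ioo (0 : ℝ) 1) :
    ∀ ε > (0 : ℝ), ∃ M > (0 : ℝ), ∀ s : ℝ, M < |s| →
      |Real.sqrt |s| * ‖gC (sqrtis s) x x‖ - 1 / 2| < ε := by
  intro ε hε
  obtain ⟨M, hM⟩ := eventually_atTop.mp <| eventually_comap.mp <|
    Metric.tendsto_nhds.mp (tendsto_sqrt_abs_mul_norm_gC_sqrtis_self hx) ε hε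
  exact ⟨max M 1, by positivity, fun s hs => hM |s| (le_of_max_le_left hs.le) s rfl⟩
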